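/- The group action φ((A, a^∧, B), (T, b^∧, K)) = (TA, Ad_{A^{-1}}(b^∧ − a^∧), Γ(A)^{-1} K B) of G on M is free: if φ(X, ξ) = ξ for some ξ ∈ M then X is the identity of G. -/
import Mathlib


open Matrix

noncomputable section

abbrev M5 : Type := Matrix (Fin 5) (Fin 5) ℝ
abbrev M3 : Type := Matrix (Fin 3) (Fin 3) ℝ

/-- Embed `(C, v, r)` as the 5×5 matrix `[[C, v, r],[0,1,0],[0,0,1]]`. -/
def emb (C : M3) (v r : Fin 3 → ℝ) : M5 :=
  Matrix.of fun i j =>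
    if hi : (i : ℕ) < 3 then
      if hj : (j : ℕ) < 3 then C ⟨i, hi⟩ ⟨j, hj⟩
      else if (j : ℕ) = 3 then v ⟨i, hi⟩ else r ⟨i, hi⟩
    else if (i : ℕ) = (j : ℕ) then 1 else 0

/-- Embed `(W, a, b)` as the 5×5 matrix `[[W, a, b],[0,0,0],[0,0,0]]`. -/
def algEmb (W : M3) (a b : Fin 3 → ℝ) : M5 :=
  Matrix.of fun i j =>
    if hi : (i : ℕ) < 3 then
      if hj : (j : ℕ) < 3 then W ⟨i, hi⟩ ⟨j, hj⟩
      else if (j : ℕ) = 3 then a ⟨i, hi⟩ else b ⟨i, hi⟩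
    else 0

def IsSO3 (C : M3) : Prop := C * Cᵀ = 1 ∧ C.det = 1

/-- `A ∈ SE₂(3)`. -/
def IsSE23 (A : M5) : Prop := ∃ C v r, IsSO3 C ∧ A = emb C v r

/-- `A ∈ SE(3)`, embedded in the 5×5 matrices with vanishing second translation. -/
def IsSE3 (A : M5) : Prop := ∃ C l, IsSO3 C ∧ A = emb C l 0

/-- `u ∈ 𝔰𝔢₂(3)`. -/
def IsAlg23 (u : M5) : Prop := ∃ W a b, Wᵀ = -W ∧ u = algEmb W a b

/-- `u ∈ 𝔰𝔢(3)` (embedded). -/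
def IsAlg3 (u : M5) : Prop := ∃ W a, Wᵀ = -W ∧ u = algEmb W a 0

/-- Rotation block of a 5×5 matrix. -/
def rotOf (A : M5) : M3 := fun i j => A (Fin.castLE (by omega) i) (Fin.castLE (by omega) j)

/-- `Γ : SE₂(3) → SO(3)`, re-embedded as a 5×5 matrix. -/
def GammaEmb (A : M5) : M5 := emb (rotOf A) 0 0

/-- column `j` (top three entries) of a 5×5 matrix. -/
def vcol (A : M5) (j : Fin 5) : Fin 3 → ℝ := fun i => A (Fin.castLE (by omega) i) j

/-- Projection of a `𝔰𝔢₂(3)` element to its `𝔰𝔢(3)` component `(W, a)`. -/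
def GammaAlg (u : M5) : M5 := algEmb (rotOf u) (vcol u 3) 0

/-- Rotation-only part of a `𝔰𝔢₂(3)` element (differential of `Γ`). -/
def GammaRotAlg (u : M5) : M5 := algEmb (rotOf u) 0 0

/-- The group action `φ` of `G = (SE₂(3) ⋉ 𝔰𝔢₂(3)) × SE(3)` on
`M = SE₂(3) × 𝔰𝔢₂(3) × SE(3)`. -/
def phi (A a B T b K : M5) : M5 × M5 × M5 :=
  (T * A, A⁻¹ * (b - a) * A, (GammaEmb A)⁻¹ * K * B)

/-- The constant matrix `D = E_{3,4}` (0-indexed) shifting the `v`-column into the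
`r`-column. -/
def Dmat : M5 := Matrix.of fun i j => if (i : ℕ) = 3 ∧ (j : ℕ) = 4 then 1 else 0

/-- The drift vector field `f₁⁰(X) = (O, 0, v) ∈ T_X SE₂(3)`, realized as the
commutator `X D - D X`. -/
def f10 (X : M5) : M5 := X * Dmat - Dmat * X

lemma val3 : ((3 : Fin 5) : ℕ) = 3 := rfl
lemma val4 : ((4 : Fin 5) : ℕ) = 4 := rfl

set_option maxHeartbeats 1000000 in
lemma emb_mul (C C' : M3) (v r v' r' : Fin 3 → ℝ) :
    emb C v r * emb C' v' r' = emb (C * C') (C *ᵥ v' + v) (C *ᵥ r' + r) := by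
  ext i j
  rw [Matrix.mul_apply, Fin.sum_univ_five]
  fin_cases i <;> fin_cases j <;>
    norm_num [emb, Matrix.mulVec, dotProduct, Fin.sum_univ_three, Matrix.mul_apply, val3, val4, Fin.ext_iff] <;> rfl

lemma emb_one : emb 1 0 0 = (1 : M5) := by
  ext i j
  fin_cases i <;> fin_cases j <;> norm_num [emb, Matrix.one_apply, val3, val4, Fin.ext_iff]

lemma se23_inv {T : M5} (hT : IsSE23 T) : ∃ S : M5, S * T = 1 ∧ T * S = 1 := by
  obtain ⟨C, v, r, hC, rfl⟩ := hT
  refine ⟨emb Cᵀ (-(Cᵀ *ᵥ v)) (-(Cᵀ *ᵥ r)), ?_, ?_⟩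
  · rw [mul_eq_one_comm]
    rw [emb_mul, hC.1]
    simp [Matrix.mulVec_neg, Matrix.mulVec_mulVec, hC.1, emb_one]
  · rw [emb_mul, hC.1]
    simp [Matrix.mulVec_neg, Matrix.mulVec_mulVec, hC.1, emb_one]

lemma rotOf_one : rotOf (1 : M5) = 1 := by
  ext i j
  fin_cases i <;> fin_cases j <;> norm_num [rotOf, Matrix.one_apply, Fin.castLE, Fin.ext_iff]

lemma M5_inv_one : (1 : M5)⁻¹ = 1 := Matrix.inv_eq_left_inv (by simp)

lemma gammaEmb_one : GammaEmb (1 : M5) = 1 := by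
  rw [GammaEmb, rotOf_one, emb_one]

/-- The group action `φ` of `G = (SE₂(3) ⋉ 𝔰𝔢₂(3)) × SE(3)` on
`M = SE₂(3) × 𝔰𝔢₂(3) × SE(3)` is free: if `φ(X, ξ) = ξ` for some `ξ ∈ M` then
`X = (A, a, B)` is the identity `(I, 0, I)` of `G`. -/

theorem phi_is_free :
    ∀ A a B T b K : M5,
      IsSE23 A → IsAlg23 a → IsSE3 B →
      IsSE23 T → IsAlg23 b → IsSE3 K →
      phi A a B T b K = (T, b, K) →
      A = 1 ∧ a = 0 ∧ B = 1 := by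
  intro A a B T b K hA ha hB hT hb hK hphi
  rw [phi, Prod.mk.injEq, Prod.mk.injEq] at hphi
  obtain ⟨h1, h2, h3⟩ := hphi
  obtain ⟨S, hST, hTS⟩ := se23_inv hT
  have hA1 : A = 1 := by
    have := congrArg (S * ·) h1
    simpa [← mul_assoc, hST] using this
  subst hA1
  refine ⟨rfl, ?_, ?_⟩
  · rw [M5_inv_one, one_mul, mul_one, sub_eq_self] at h2
    exact h2
  · rw [gammaEmb_one, M5_inv_one, one_mul] at h3
    obtain ⟨C, l, hC, rfl⟩ := hK
    obtain ⟨S', hS'K, _⟩ := se23_inv ⟨C, l, 0, hC, rfl⟩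
    have := congrArg (S' * ·) h3
    simpa [← mul_assoc, hS'K] using this
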